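/- Let k be a field of characteristic ≠ 2, H₄ the Sweedler Hopf algebra, and α ∈ k. Then f = (1/2)(1 + c + αcx) is an idempotent of H₄; the map ρ̄: k → H₄ ≅ k ⊗ H₄, λ ↦ λf, makes k a partial H₄-comodule algebra; and the smallest H₄-subcomodule subalgebra of H₄ (with coaction Δ) containing k·f is the two-dimensional subalgebra spanned by {1, f}, which is a globalization of this partial coaction. -/

import Mathlib

/-!
The element `f = ½(1 + c + α c x)` satisfies `f² = f`, `ε f = 1` and `Δ f = f ⊗ c + 1 ⊗ (f - c)`,
hence `(f ⊗ 1) Δ f = f ⊗ f`; these three identities are exactly the axioms of a partial coaction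
for `λ ↦ λ ⊗ f`, and the last one is the intertwining property of `λ ↦ λ f`. The formula for `Δ f`
also shows that `span {1, f}` is a subcomodule. Conversely, if a subcomodule `W` contains `f`, then
applying `id ⊗ φ` to `Δ f ∈ W ⊗ H`, where `φ` is the coefficient of `1` in the basis
`{1, c, x, c x}`, gives `φ (f - c) • 1 = ½ • 1 ∈ W`.
-/

open TensorProduct

/-- The axioms of a (right) partial coaction `ρ : A → A ⊗ H` of a Hopf algebra `H` on a
unital algebra `A`. -/
structure IsPartialCoaction (k : Type*) [Field k] (H A : Type*) [Ring H] [HopfAlgebra k H]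
    [Ring A] [Algebra k A] (ρ : A →ₗ[k] A ⊗[k] H) : Prop where
  map_mul : ∀ a b : A, ρ (a * b) = ρ a * ρ b
  counit_id : ∀ a : A,
    (TensorProduct.rid k A) ((LinearMap.lTensor A Coalgebra.counit) (ρ a)) = a
  coassoc : ∀ a : A,
    (LinearMap.rTensor H ρ) (ρ a) =
      (ρ 1 ⊗ₜ[k] (1 : H)) *
        ((TensorProduct.assoc k A H H).symm ((LinearMap.lTensor A Coalgebra.comul) (ρ a)))

theorem LinearIndependent.exists_linearMap_apply_eq_single {K V ι : Type*} [Field K]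
    [AddCommGroup V] [Module K V] {v : ι → V} (hv : LinearIndependent K v) :
    ∃ g : V →ₗ[K] ι →₀ K, ∀ i, g (v i) = Finsupp.single i 1 := by
  obtain ⟨g, hg⟩ := (Finsupp.linearCombination K v).exists_leftInverse_of_injective
    (linearIndependent_iff_ker.mp hv)
  refine ⟨g, fun i => ?_⟩
  simpa using LinearMap.congr_fun hg (Finsupp.single i 1)

theorem TensorProduct.tmul_mem_range_rTensor_subtype {R M N : Type*} [CommRing R]
    [AddCommGroup M] [Module R M] [AddCommGroup N] [Module R N] {W : Submodule R M} {w : M}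
    (hw : w ∈ W) (n : N) : w ⊗ₜ[R] n ∈ LinearMap.range (LinearMap.rTensor N W.subtype) :=
  ⟨⟨w, hw⟩ ⊗ₜ n, rfl⟩

section TensorAssoc

variable {R A H : Type*} [CommRing R] [Ring A] [Algebra R A] [Ring H] [Algebra R H]

theorem tmul_tmul_one_mul_assoc_symm_tmul (b a : A) (f : H) (u : H ⊗[R] H) :
    ((b ⊗ₜ[R] f) ⊗ₜ[R] (1 : H)) * (TensorProduct.assoc R A H H).symm (a ⊗ₜ u) =
      (TensorProduct.assoc R A H H).symm ((b * a) ⊗ₜ ((f ⊗ₜ 1) * u)) := by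
  induction u using TensorProduct.induction_on with
  | zero => simp
  | tmul p q => simp [Algebra.TensorProduct.tmul_mul_tmul]
  | add u v hu hv => simp only [tmul_add, mul_add, map_add, hu, hv]

end TensorAssoc

section Idempotent

variable {R A : Type*} [CommRing R] [Ring A] [Algebra R A] {e : A}

theorem IsIdempotentElem.mul_mem_span_one (he : IsIdempotentElem e) {u v : A}
    (hu : u ∈ Submodule.span R {1, e}) (hv : v ∈ Submodule.span R {1, e}) :
    u * v ∈ Submodule.span R {1, e} := by
  obtain ⟨a, b, rfl⟩ := Submodule.mem_span_pair.mp hu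
  obtain ⟨a', b', rfl⟩ := Submodule.mem_span_pair.mp hv
  refine Submodule.mem_span_pair.mpr ⟨a * a', a * b' + b * a' + b * b', ?_⟩
  simp only [mul_add, add_mul, smul_mul_assoc, mul_smul_comm, one_mul, mul_one, he.eq]
  module

theorem IsIdempotentElem.mul_mem_span_singleton (he : IsIdempotentElem e) {b : A}
    (hb : b ∈ Submodule.span R {1, e}) : e * b ∈ Submodule.span R {e} := by
  obtain ⟨a, a', rfl⟩ := Submodule.mem_span_pair.mp hb
  refine Submodule.mem_span_singleton.mpr ⟨a + a', ?_⟩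
  rw [mul_add, mul_smul_comm, mul_smul_comm, mul_one, he.eq, add_smul]

end Idempotent

section Subcomodule

variable {R C : Type*} [CommRing R] [AddCommGroup C] [Module R C] [Coalgebra R C]

theorem comul_mem_range_rTensor_span {S : Set C}
    (hS : ∀ s ∈ S, Coalgebra.comul (R := R) s ∈
      LinearMap.range (LinearMap.rTensor C (Submodule.span R S).subtype)) :
    ∀ w ∈ Submodule.span R S, Coalgebra.comul (R := R) w ∈
      LinearMap.range (LinearMap.rTensor C (Submodule.span R S).subtype) :=
  fun _ hw => (Submodule.span_le (p := (LinearMap.range _).comap _)).mpr hS hw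

theorem rid_lTensor_comul_mem {W : Submodule R C}
    (hW : ∀ w ∈ W, Coalgebra.comul (R := R) w ∈
      LinearMap.range (LinearMap.rTensor C W.subtype))
    (φ : C →ₗ[R] R) {w : C} (hw : w ∈ W) :
    TensorProduct.rid R C (LinearMap.lTensor C φ (Coalgebra.comul w)) ∈ W := by
  obtain ⟨t, ht⟩ := hW w hw
  rw [← ht]
  clear ht
  induction t using TensorProduct.induction_on with
  | zero => simp
  | tmul w h => simpa using W.smul_mem (φ h) w.2
  | add s t hs ht => simpa only [map_add] using W.add_mem hs ht

end Subcomodule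

theorem LinearMap.toSpanSingleton_one_tmul_apply {R M : Type*} [CommSemiring R] [AddCommMonoid M]
    [Module R M] (m : M) (a : R) :
    LinearMap.toSpanSingleton R (R ⊗[R] M) (1 ⊗ₜ m) a = a ⊗ₜ m := by
  rw [LinearMap.toSpanSingleton_apply, smul_tmul', smul_eq_mul, mul_one]

section Bialgebra

variable {k H : Type*} [CommRing k] [Ring H] [Bialgebra k H] {f : H}

theorem tmul_one_mul_comul_eq_tmul_self {c : H} (hff : f * f = f)
    (hΔf : Coalgebra.comul (R := k) f = f ⊗ₜ[k] c + 1 ⊗ₜ[k] (f - c)) :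
    (f ⊗ₜ[k] (1 : H)) * Coalgebra.comul f = f ⊗ₜ f := by
  rw [hΔf, mul_add, Algebra.TensorProduct.tmul_mul_tmul, Algebra.TensorProduct.tmul_mul_tmul,
    hff, one_mul, one_mul, mul_one, ← tmul_add, add_sub_cancel]

theorem rTensor_toSpanSingleton_toSpanSingleton_one_tmul
    (hΔ : (f ⊗ₜ[k] (1 : H)) * Coalgebra.comul f = f ⊗ₜ f) (a : k) :
    LinearMap.rTensor H (LinearMap.toSpanSingleton k H f)
        (LinearMap.toSpanSingleton k (k ⊗[k] H) (1 ⊗ₜ f) a) =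
      (f ⊗ₜ[k] (1 : H)) * Coalgebra.comul (LinearMap.toSpanSingleton k H f a) := by
  rw [LinearMap.toSpanSingleton_one_tmul_apply, LinearMap.rTensor_tmul,
    LinearMap.toSpanSingleton_apply, map_smul, mul_smul_comm, hΔ, smul_tmul']

end Bialgebra

theorem isPartialCoaction_toSpanSingleton_one_tmul {k H : Type*} [Field k] [Ring H]
    [HopfAlgebra k H] {f : H} (hff : f * f = f) (hε : Coalgebra.counit (R := k) f = 1)
    (hΔ : (f ⊗ₜ[k] (1 : H)) * Coalgebra.comul f = f ⊗ₜ f) :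
    IsPartialCoaction k H k (LinearMap.toSpanSingleton k (k ⊗[k] H) (1 ⊗ₜ f)) where
  map_mul a b := by
    simp only [LinearMap.toSpanSingleton_one_tmul_apply, Algebra.TensorProduct.tmul_mul_tmul, hff]
  counit_id a := by simp [hε]
  coassoc a := by
    simp only [LinearMap.toSpanSingleton_one_tmul_apply, LinearMap.rTensor_tmul,
      LinearMap.lTensor_tmul, tmul_tmul_one_mul_assoc_symm_tmul, one_mul, hΔ,
      TensorProduct.assoc_symm_tmul]

def sweedlerIdempotent (k : Type*) {H : Type*} [Field k] [Ring H] [Algebra k H] (c x : H)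
    (α : k) : H :=
  (2 : k)⁻¹ • (1 + c + α • (c * x))

section Sweedler

variable {k H : Type*} [Field k] [Ring H] [Bialgebra k H] {c x : H}

theorem sweedlerIdempotent_mul_self (hchar : (2 : k) ≠ 0) (hc2 : c * c = 1) (hx2 : x * x = 0)
    (hxc : x * c = -(c * x)) (α : k) :
    sweedlerIdempotent k c x α * sweedlerIdempotent k c x α = sweedlerIdempotent k c x α := by
  have hccx : c * (c * x) = x := by rw [← mul_assoc, hc2, one_mul]
  have hcxc : c * x * c = -x := by rw [mul_assoc, hxc, mul_neg, hccx]
  have hcxcx : c * x * (c * x) = 0 := by rw [← mul_assoc, hcxc, neg_mul, hx2, neg_zero]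
  have hsq : (1 + c + α • (c * x)) * (1 + c + α • (c * x)) = (2 : k) • (1 + c + α • (c * x)) := by
    simp only [mul_add, add_mul, one_mul, mul_one, smul_mul_assoc, mul_smul_comm, hc2, hccx,
      hcxc, hcxcx, smul_zero, smul_neg]
    module
  rw [sweedlerIdempotent, smul_mul_smul_comm, hsq, smul_smul, mul_assoc, inv_mul_cancel₀ hchar,
    mul_one]

theorem counit_sweedlerIdempotent (hchar : (2 : k) ≠ 0) (hεc : Coalgebra.counit (R := k) c = 1)
    (hεx : Coalgebra.counit (R := k) x = 0) (α : k) :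
    Coalgebra.counit (R := k) (sweedlerIdempotent k c x α) = 1 := by
  simp [sweedlerIdempotent, Bialgebra.counit_mul, hεc, hεx, ← two_mul, hchar]

theorem comul_sweedlerIdempotent (hchar : (2 : k) ≠ 0) (hc2 : c * c = 1)
    (hΔc : Coalgebra.comul (R := k) c = c ⊗ₜ[k] c)
    (hΔx : Coalgebra.comul (R := k) x = x ⊗ₜ[k] 1 + c ⊗ₜ[k] x) (α : k) :
    Coalgebra.comul (R := k) (sweedlerIdempotent k c x α) =
      sweedlerIdempotent k c x α ⊗ₜ[k] c + 1 ⊗ₜ[k] (sweedlerIdempotent k c x α - c) := by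
  have hΔcx : Coalgebra.comul (R := k) (c * x) = (c * x) ⊗ₜ[k] c + 1 ⊗ₜ[k] (c * x) := by
    rw [Bialgebra.comul_mul, hΔc, hΔx, mul_add, Algebra.TensorProduct.tmul_mul_tmul,
      Algebra.TensorProduct.tmul_mul_tmul, hc2, mul_one]
  simp only [sweedlerIdempotent, map_smul, map_add, Bialgebra.comul_one, hΔc, hΔcx,
    Algebra.TensorProduct.one_def, add_tmul, tmul_add, tmul_sub, ← smul_tmul', tmul_smul]
  match_scalars <;> grind

theorem exists_linearMap_sweedler_coords (hbasis : LinearIndependent k ![(1 : H), c, x, c * x]) :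
    ∃ g : H →ₗ[k] Fin 4 →₀ k, g 1 = Finsupp.single 0 1 ∧ g c = Finsupp.single 1 1 ∧
      g (c * x) = Finsupp.single 3 1 :=
  let ⟨g, hg⟩ := hbasis.exists_linearMap_apply_eq_single
  ⟨g, hg 0, hg 1, hg 3⟩

theorem linearIndependent_one_sweedlerIdempotent (hchar : (2 : k) ≠ 0)
    (hbasis : LinearIndependent k ![(1 : H), c, x, c * x]) (α : k) :
    LinearIndependent k ![(1 : H), sweedlerIdempotent k c x α] := by
  obtain ⟨g, hg1, hgc, hgcx⟩ := exists_linearMap_sweedler_coords hbasis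
  refine (LinearIndependent.pair_iff' (by simpa using hbasis.ne_zero 0)).mpr fun a ha => ?_
  have hcoord := congr_arg (fun h => g h 1) ha
  simp [sweedlerIdempotent, hg1, hgc, hgcx] at hcoord
  exact hchar hcoord.symm

theorem span_one_sweedlerIdempotent_le (hchar : (2 : k) ≠ 0) (hc2 : c * c = 1)
    (hbasis : LinearIndependent k ![(1 : H), c, x, c * x])
    (hΔc : Coalgebra.comul (R := k) c = c ⊗ₜ[k] c)
    (hΔx : Coalgebra.comul (R := k) x = x ⊗ₜ[k] 1 + c ⊗ₜ[k] x) (α : k) {W : Submodule k H}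
    (hW : ∀ w ∈ W, Coalgebra.comul (R := k) w ∈ LinearMap.range (LinearMap.rTensor H W.subtype))
    (hf : sweedlerIdempotent k c x α ∈ W) :
    Submodule.span k {(1 : H), sweedlerIdempotent k c x α} ≤ W := by
  refine Submodule.span_le.mpr (Set.insert_subset_iff.mpr ⟨?_, Set.singleton_subset_iff.mpr hf⟩)
  obtain ⟨g, hg1, hgc, hgcx⟩ := exists_linearMap_sweedler_coords hbasis
  have hmem := rid_lTensor_comul_mem hW (Finsupp.lapply 0 ∘ₗ g) hf
  rw [comul_sweedlerIdempotent hchar hc2 hΔc hΔx] at hmem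
  simp [sweedlerIdempotent, hg1, hgc, hgcx] at hmem
  exact (W.smul_mem_iff (inv_ne_zero hchar)).mp hmem

theorem comul_mem_range_rTensor_span_one_sweedlerIdempotent (hchar : (2 : k) ≠ 0)
    (hc2 : c * c = 1) (hΔc : Coalgebra.comul (R := k) c = c ⊗ₜ[k] c)
    (hΔx : Coalgebra.comul (R := k) x = x ⊗ₜ[k] 1 + c ⊗ₜ[k] x) (α : k) :
    ∀ w ∈ Submodule.span k {(1 : H), sweedlerIdempotent k c x α},
      Coalgebra.comul (R := k) w ∈ LinearMap.range (LinearMap.rTensor H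
        (Submodule.span k {(1 : H), sweedlerIdempotent k c x α}).subtype) := by
  have h1 := Submodule.subset_span (R := k) (Set.mem_insert (1 : H) {sweedlerIdempotent k c x α})
  have hf := Submodule.subset_span (R := k)
    (Set.mem_insert_of_mem (1 : H) (Set.mem_singleton (sweedlerIdempotent k c x α)))
  refine comul_mem_range_rTensor_span ?_
  rintro s (rfl | rfl)
  · rw [Bialgebra.comul_one, Algebra.TensorProduct.one_def]
    exact TensorProduct.tmul_mem_range_rTensor_subtype h1 1
  · rw [comul_sweedlerIdempotent hchar hc2 hΔc hΔx]
    exact add_mem (TensorProduct.tmul_mem_range_rTensor_subtype hf c)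
      (TensorProduct.tmul_mem_range_rTensor_subtype h1 _)

end Sweedler

theorem sweedler_partial_coaction_on_base_field
    (k : Type*) [Field k] (hchar : (2 : k) ≠ 0)
    (H : Type*) [Ring H] [HopfAlgebra k H] (c x : H)
    -- `H` is the Sweedler Hopf algebra `H₄`:
    (hbasis : LinearIndependent k ![(1 : H), c, x, c * x])
    (hc2 : c * c = 1) (hx2 : x * x = 0) (hxc : x * c = -(c * x))
    (hΔc : Coalgebra.comul (R := k) c = c ⊗ₜ[k] c)
    (hΔx : Coalgebra.comul (R := k) x = x ⊗ₜ[k] 1 + c ⊗ₜ[k] x)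
    (hεc : Coalgebra.counit (R := k) c = 1)
    (hεx : Coalgebra.counit (R := k) x = 0)
    (α : k) :
    -- `f = (1/2)(1 + c + α c x)` is an idempotent
    ((2 : k)⁻¹ • ((1 : H) + c + α • (c * x))) * ((2 : k)⁻¹ • ((1 : H) + c + α • (c * x))) =
      (2 : k)⁻¹ • ((1 : H) + c + α • (c * x)) ∧
    -- `ρ̄ : k → k ⊗ H₄ ≅ H₄`, `λ ↦ λ ⊗ f`, is a partial `H₄`-coaction on `k`
    IsPartialCoaction k H k
      (LinearMap.toSpanSingleton k (k ⊗[k] H)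
        ((1 : k) ⊗ₜ[k] ((2 : k)⁻¹ • ((1 : H) + c + α • (c * x))))) ∧
    -- `span {1, f}` is two-dimensional ...
    LinearIndependent k ![(1 : H), (2 : k)⁻¹ • ((1 : H) + c + α • (c * x))] ∧
    -- ... closed under multiplication ...
    (∀ u ∈ Submodule.span k {(1 : H), (2 : k)⁻¹ • ((1 : H) + c + α • (c * x))},
     ∀ v ∈ Submodule.span k {(1 : H), (2 : k)⁻¹ • ((1 : H) + c + α • (c * x))},
      u * v ∈ Submodule.span k {(1 : H), (2 : k)⁻¹ • ((1 : H) + c + α • (c * x))}) ∧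
    -- ... a subcomodule for the coaction `Δ` of `H₄` on itself ...
    (∀ w ∈ Submodule.span k {(1 : H), (2 : k)⁻¹ • ((1 : H) + c + α • (c * x))},
      Coalgebra.comul (R := k) w ∈ LinearMap.range (LinearMap.rTensor H
        (Submodule.subtype
          (Submodule.span k {(1 : H), (2 : k)⁻¹ • ((1 : H) + c + α • (c * x))})))) ∧
    -- ... contains `k f` ...
    ((2 : k)⁻¹ • ((1 : H) + c + α • (c * x)) ∈
      Submodule.span k {(1 : H), (2 : k)⁻¹ • ((1 : H) + c + α • (c * x))}) ∧
    -- ... and is the smallest such subspace: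
    (∀ W : Submodule k H,
      (∀ u ∈ W, ∀ v ∈ W, u * v ∈ W) →
      (∀ w ∈ W, Coalgebra.comul (R := k) w ∈
        LinearMap.range (LinearMap.rTensor H (Submodule.subtype W))) →
      (2 : k)⁻¹ • ((1 : H) + c + α • (c * x)) ∈ W →
      Submodule.span k {(1 : H), (2 : k)⁻¹ • ((1 : H) + c + α • (c * x))} ≤ W) ∧
    -- globalization properties: `θ : λ ↦ λ f` is injective, its image `k f` is a right
    -- ideal of `B = span {1, f}`, and `θ` intertwines `ρ̄` with the coaction induced by `Δ`
    Function.Injective (LinearMap.toSpanSingleton k H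
      ((2 : k)⁻¹ • ((1 : H) + c + α • (c * x)))) ∧
    (∀ b ∈ Submodule.span k {(1 : H), (2 : k)⁻¹ • ((1 : H) + c + α • (c * x))},
      ((2 : k)⁻¹ • ((1 : H) + c + α • (c * x))) * b ∈
        Submodule.span k {(2 : k)⁻¹ • ((1 : H) + c + α • (c * x))}) ∧
    (∀ lam : k,
      (LinearMap.rTensor H
          (LinearMap.toSpanSingleton k H ((2 : k)⁻¹ • ((1 : H) + c + α • (c * x)))))
        ((LinearMap.toSpanSingleton k (k ⊗[k] H)
          ((1 : k) ⊗ₜ[k] ((2 : k)⁻¹ • ((1 : H) + c + α • (c * x))))) lam) =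
      (((2 : k)⁻¹ • ((1 : H) + c + α • (c * x))) ⊗ₜ[k] (1 : H)) *
        Coalgebra.comul
          ((LinearMap.toSpanSingleton k H ((2 : k)⁻¹ • ((1 : H) + c + α • (c * x)))) lam)) := by
  have hff := sweedlerIdempotent_mul_self hchar hc2 hx2 hxc α
  have hε := counit_sweedlerIdempotent hchar hεc hεx α
  have hΔ := tmul_one_mul_comul_eq_tmul_self hff (comul_sweedlerIdempotent hchar hc2 hΔc hΔx α)
  have hf0 : sweedlerIdempotent k c x α ≠ 0 := fun h => by simp [h] at hε
  refine ⟨hff, isPartialCoaction_toSpanSingleton_one_tmul hff hε hΔ,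
    linearIndependent_one_sweedlerIdempotent hchar hbasis α,
    fun u hu v hv => IsIdempotentElem.mul_mem_span_one hff hu hv,
    comul_mem_range_rTensor_span_one_sweedlerIdempotent hchar hc2 hΔc hΔx α,
    Submodule.subset_span (Set.mem_insert_of_mem _ rfl),
    fun W _ hW hf => span_one_sweedlerIdempotent_le hchar hc2 hbasis hΔc hΔx α hW hf,
    smul_left_injective k hf0, fun b hb => IsIdempotentElem.mul_mem_span_singleton hff hb,
    rTensor_toSpanSingleton_toSpanSingleton_one_tmul hΔ⟩
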